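/- For a finitary coarse space X_G the following are equivalent: (1) X_G is indiscrete (has no infinite discrete subset); (2) for every infinite A ⊆ X there exist a free ultrafilter p and g ∈ G such that A ∈ p, A ∈ gp, and p ≠ gp; (3) no infinite subset A of X is sparse. -/

import Mathlib

open Set

/-- A coarse structure on a set `X`. -/
structure CoarseStructure (X : Type*) where
  sets : Set (Set (X × X))
  diagonal_mem : ∀ E ∈ sets, ∀ x : X, (x, x) ∈ E
  comp_mem : ∀ E ∈ sets, ∀ E' ∈ sets,
    {q : X × X | ∃ z : X, (q.1, z) ∈ E ∧ (z, q.2) ∈ E'} ∈ sets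
  inv_mem : ∀ E ∈ sets, {q : X × X | (q.2, q.1) ∈ E} ∈ sets
  subset_mem : ∀ E ∈ sets, ∀ E', E' ⊆ E → (∀ x : X, (x, x) ∈ E') → E' ∈ sets
  covers : ⋃₀ sets = Set.univ

/-- The ball `E[A]`. -/
def ball {X : Type*} (E : Set (X × X)) (A : Set X) : Set X := {y | ∃ a ∈ A, (a, y) ∈ E}

/-- A bounded subset of a coarse space. -/
def CoarseStructure.Bounded {X : Type*} (C : CoarseStructure X) (B : Set X) : Prop :=
  ∃ E ∈ C.sets, ∃ x : X, B ⊆ ball E {x}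

/-- A finitary coarse space: uniformly finite balls. -/
def CoarseStructure.Finitary {X : Type*} (C : CoarseStructure X) : Prop :=
  ∀ E ∈ C.sets, ∃ n : ℕ, ∀ x : X, (ball E {x}).Finite ∧ (ball E {x}).ncard < n

/-- The set `X^♯` of ultrafilters all of whose members are unbounded. -/
def CoarseStructure.Sharp {X : Type*} (C : CoarseStructure X) : Set (Ultrafilter X) :=
  {p | ∀ P ∈ p, ¬ C.Bounded P}

/-- The parallelity relation on ultrafilters. -/
def CoarseStructure.Parallel {X : Type*} (C : CoarseStructure X) (p q : Ultrafilter X) : Prop :=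
  ∃ E ∈ C.sets, ∀ P ∈ p, ball E P ∈ q

/-- The entourage determined by a set of permutations. -/
def entourage {X : Type*} (F : Set (Equiv.Perm X)) : Set (X × X) :=
  {q | ∃ g ∈ F, q.2 = g q.1}

/-- The finitary coarse structure `X_G` determined by a group `G` of permutations of `X`:
its entourages are the diagonal-containing subsets of `{(x,gx) : x ∈ X, g ∈ F}`
for finite `F ⊆ G` with `id ∈ F`. -/
def XGsets {X : Type*} (G : Subgroup (Equiv.Perm X)) : Set (Set (X × X)) :=
  {E | (∀ x : X, (x, x) ∈ E) ∧ ∃ F : Finset (Equiv.Perm X),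
    (1 : Equiv.Perm X) ∈ F ∧ ↑F ⊆ (G : Set (Equiv.Perm X)) ∧ E ⊆ entourage ↑F}

/-- A free ultrafilter. -/
def IsFree {X : Type*} (p : Ultrafilter X) : Prop := (p : Filter X) ≤ Filter.cofinite

/-- `X*`, the space of free ultrafilters with the Stone topology. -/
def FreeUF (X : Type*) : Type _ := {p : Ultrafilter X // IsFree p}

instance (X : Type*) : TopologicalSpace (FreeUF X) :=
  instTopologicalSpaceSubtype

/-- The orbit `Gp` of an ultrafilter under the induced action `gp = {gP : P ∈ p}`. -/
def ufOrbit {X : Type*} (G : Subgroup (Equiv.Perm X)) (p : Ultrafilter X) :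
    Set (Ultrafilter X) :=
  {q | ∃ g ∈ G, q = Ultrafilter.map (⇑g) p}

/-- The `p`-companion `Δ_p(A) = A* ∩ Gp`. -/
def compan {X : Type*} (G : Subgroup (Equiv.Perm X)) (p : Ultrafilter X) (A : Set X) :
    Set (Ultrafilter X) :=
  {q | A ∈ q ∧ q ∈ ufOrbit G p}

/-- Large subsets of `X_G`. -/
def IsLarge {X : Type*} (G : Subgroup (Equiv.Perm X)) (A : Set X) : Prop :=
  ∃ E ∈ XGsets G, ball E A = Set.univ

/-- Thick subsets of `X_G`. -/
def IsThick {X : Type*} (G : Subgroup (Equiv.Perm X)) (A : Set X) : Prop :=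
  ∀ E ∈ XGsets G, ∃ a ∈ A, ball E {a} ⊆ A

/-- Thin (discrete) subsets of `X_G`. -/
def IsThin {X : Type*} (G : Subgroup (Equiv.Perm X)) (A : Set X) : Prop :=
  ∀ E ∈ XGsets G, ∃ B : Set X, B.Finite ∧ ∀ a ∈ A \ B, ball E {a} ∩ A = {a}

/-- Sparse subsets of `X_G`. -/
def IsSparse {X : Type*} (G : Subgroup (Equiv.Perm X)) (A : Set X) : Prop :=
  ∀ p : Ultrafilter X, IsFree p → (compan G p A).Finite

/-- Scattered subsets of `X_G`. -/
def IsScattered {X : Type*} (G : Subgroup (Equiv.Perm X)) (A : Set X) : Prop :=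
  ∀ Y ⊆ A, Y.Infinite →
    ∃ p : Ultrafilter X, IsFree p ∧ Y ∈ p ∧ (compan G p Y).Finite

/-- Close subsets of a coarse space. -/
def CoarseStructure.Close {X : Type*} (C : CoarseStructure X) (A B : Set X) : Prop :=
  ∃ E ∈ C.sets, A ⊆ ball E B ∧ B ⊆ ball E A

/-- Close subsets of `X_G`. -/
def CloseG {X : Type*} (G : Subgroup (Equiv.Perm X)) (A B : Set X) : Prop :=
  ∃ E ∈ XGsets G, A ⊆ ball E B ∧ B ⊆ ball E A

/-- Linked subsets of `X_G`. -/
def LinkedG {X : Type*} (G : Subgroup (Equiv.Perm X)) (A B : Set X) : Prop :=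
  (A.Finite ∧ B.Finite) ∨
    ∃ A' ⊆ A, ∃ B' ⊆ B, A'.Infinite ∧ B'.Infinite ∧ CloseG G A' B'


open Set

/-- The `n`-th block `{g_0^{ε_0} ⋯ g_n^{ε_n} x_n : ε_i ∈ {0,1}}`. -/
def pwBlock {X : Type*} (g : ℕ → Equiv.Perm X) (x : ℕ → X) (n : ℕ) : Set X :=
  {y | ∃ ε : Fin (n + 1) → Bool,
    y = ((List.ofFn fun i : Fin (n + 1) =>
      (g i) ^ (if ε i then 1 else 0)).prod : Equiv.Perm X) (x n)}

/-- A piece-wise shifted FP-set determined by the group `G`. -/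
def IsPWShiftedFP {X : Type*} (G : Subgroup (Equiv.Perm X)) (Y : Set X) : Prop :=
  ∃ g : ℕ → Equiv.Perm X, ∃ x : ℕ → X,
    (∀ n, g n ∈ G) ∧
    (∀ m n, m ≠ n → Disjoint (pwBlock g x m) (pwBlock g x n)) ∧
    (∀ n, (pwBlock g x n).ncard = 2 ^ (n + 1)) ∧
    Y = ⋃ n, pwBlock g x n

/-- The group of all self-homeomorphisms of a topological space, as a subgroup
of the permutation group. -/
def homeoSubgroup (X : Type*) [TopologicalSpace X] : Subgroup (Equiv.Perm X) where
  carrier := {g | Continuous g ∧ Continuous g.symm}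
  one_mem' := ⟨continuous_id, continuous_id⟩
  mul_mem' := by
    rintro a b ⟨ha1, ha2⟩ ⟨hb1, hb2⟩
    refine ⟨?_, ?_⟩
    · simpa [Equiv.Perm.mul_def, Equiv.coe_trans] using ha1.comp hb1
    · simpa [Equiv.Perm.mul_def, Equiv.symm_trans_apply] using (hb2.comp ha2 : _)
  inv_mem' := by
    rintro a ⟨ha1, ha2⟩
    exact ⟨ha2, by first | exact ha1 | simpa [Equiv.Perm.inv_def] using ha1⟩


/-- The parallelity relation on ultrafilters over the coarse space `X_G`. -/
def ParallelG {X : Type*} (G : Subgroup (Equiv.Perm X)) (p q : Ultrafilter X) : Prop :=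
  ∃ E ∈ XGsets G, ∀ P ∈ p, ball E P ∈ q

/-- Linked subsets of a coarse space. -/
def CoarseStructure.Linked {X : Type*} (C : CoarseStructure X) (A B : Set X) : Prop :=
  (C.Bounded A ∧ C.Bounded B) ∨
    ∃ A' ⊆ A, ∃ B' ⊆ B, ¬ C.Bounded A' ∧ ¬ C.Bounded B' ∧ C.Close A' B'

/-- The orbit `Gp` viewed as a subset of the space `X*` of free ultrafilters. -/
def freeOrbit {X : Type*} (G : Subgroup (Equiv.Perm X)) (p : Ultrafilter X) :
    Set (FreeUF X) :=
  {q | q.1 ∈ ufOrbit G p}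

/-!
A set `A` is thin exactly when every `g ∈ G` moves only finitely many points of `A` inside `A`.
Hence if `A ∈ p` and `A ∈ gp` for a free `p`, then `g` fixes a member of `p` pointwise, so
`gp = p`. If `gp ≠ g'p` both lie in `Δ_p(A)`, then `gp` and `g'g⁻¹` witness (2).

For (1) ⇒ (3), an infinite `A` none of whose infinite subsets is thin yields inductively distinct
`g₀, g₁, … ∈ G` and a decreasing sequence of infinite sets `D₀ ⊇ D₁ ⊇ ⋯` in `A` such that the
translates `gᵢ D_{n}`, `i < n`, are pairwise disjoint subsets of `A`: the set `D_n` is not thin, so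
some `g` moves infinitely many of its points inside `D_n`, and a greedy choice shrinks those points
to an infinite set on which `g` and the earlier `gᵢ` have disjoint images. A free ultrafilter `p`
containing every `D_n` then has infinitely many distinct translates `gᵢ p` containing `A`.
-/

section Combinatorics

variable {α : Type*}

theorem exists_seq_of_forall_exists {P : α → Prop} {r : α → α → Prop} {a : α} (ha : P a)
    (h : ∀ x, P x → ∃ y, P y ∧ r x y) :
    ∃ s : ℕ → α, ∀ n, P (s n) ∧ r (s n) (s (n + 1)) := by
  choose! next hnextP hnext using h
  have hP : ∀ n, P (next^[n] a) := Function.Iterate.rec P ha hnextP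
  exact ⟨fun n => next^[n] a, fun n =>
    ⟨hP n, by simpa only [Function.iterate_succ_apply'] using hnext _ (hP n)⟩⟩

theorem Set.Infinite.exists_infinite_pairwise_not {r : α → α → Prop}
    (hr : ∀ ⦃x y⦄, r x y → r y x)
    (hfin : ∀ x, {y | r x y}.Finite) {S : Set α} (hS : S.Infinite) :
    ∃ T ⊆ S, T.Infinite ∧ T.Pairwise fun x y => ¬ r x y := by
  obtain ⟨f, hfS, hf⟩ := exists_seq_of_forall_finset_exists (· ∈ S)
    (fun x y => x ≠ y ∧ ¬ r x y) fun s _ => by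
      obtain ⟨y, hyS, hy⟩ := (hS.sdiff ((s.finite_toSet.biUnion fun x _ => hfin x).union
        s.finite_toSet)).nonempty
      simp only [Set.mem_union, Set.mem_iUnion, Finset.mem_coe, Set.mem_ofPred_eq, not_or,
        not_exists] at hy
      exact ⟨y, hyS, fun x hx => ⟨fun hxy => hy.2 (hxy ▸ hx), fun hxy => hy.1 x hx hxy⟩⟩
  refine ⟨Set.range f, Set.range_subset_iff.mpr hfS, Set.infinite_range_of_injective
    (Function.Injective.of_lt_imp_ne fun m n h => (hf m n h).1), ?_⟩
  rintro _ ⟨m, rfl⟩ _ ⟨n, rfl⟩ hmn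
  rcases lt_or_gt_of_ne (fun h => hmn (h ▸ rfl) : m ≠ n) with h | h
  · exact (hf m n h).2
  · exact fun hr' => (hf n m h).2 (hr hr')

end Combinatorics

section CoarseSpaces

open Filter

variable {X : Type*}

theorem Set.Infinite.exists_infinite_pairwiseDisjoint_image {K : Set (Equiv.Perm X)}
    (hK : K.Finite) {S : Set X} (hS : S.Infinite) (hinj : ∀ x ∈ S, K.InjOn fun σ => σ x) :
    ∃ T ⊆ S, T.Infinite ∧ K.PairwiseDisjoint fun σ => ⇑σ '' T := by
  let r : X → X → Prop := fun x y => ∃ σ ∈ K, ∃ τ ∈ K, σ x = τ y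
  have hr : ∀ ⦃x y⦄, r x y → r y x := fun x y ⟨σ, hσ, τ, hτ, h⟩ => ⟨τ, hτ, σ, hσ, h.symm⟩
  have hfin : ∀ x, {y | r x y}.Finite := fun x =>
    ((hK.biUnion fun σ _ => hK.biUnion fun τ _ => Set.finite_singleton (τ⁻¹ (σ x)))).subset
      fun y ⟨σ, hσ, τ, hτ, h⟩ => by
        simp only [Set.mem_iUnion, Set.mem_singleton_iff]
        exact ⟨σ, hσ, τ, hτ, by simp [h]⟩
  obtain ⟨T, hTS, hTinf, hT⟩ := hS.exists_infinite_pairwise_not hr hfin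
  refine ⟨T, hTS, hTinf, fun σ hσ τ hτ hστ => Set.disjoint_left.mpr ?_⟩
  rintro _ ⟨x, hx, rfl⟩ ⟨y, hy, hyx⟩
  by_cases hxy : x = y
  · subst hxy
    exact hστ (hinj x (hTS hx) hσ hτ hyx.symm)
  · exact hT hx hy hxy ⟨σ, hσ, τ, hτ, hyx.symm⟩

theorem IsFree.map {p : Ultrafilter X} (hp : IsFree p) (g : Equiv.Perm X) :
    IsFree (p.map g) := by
  intro s hs
  rw [Ultrafilter.mem_coe, Ultrafilter.mem_map]
  refine hp ?_
  rw [Filter.mem_cofinite, ← Set.preimage_compl]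
  exact (Filter.mem_cofinite.mp hs).preimage g.injective.injOn

theorem exists_isFree_forall_mem {D : ℕ → Set X} (hD : Antitone D) (hinf : ∀ n, (D n).Infinite) :
    ∃ p : Ultrafilter X, IsFree p ∧ ∀ n, D n ∈ p := by
  have : (⨅ n, cofinite ⊓ 𝓟 (D n)).NeBot :=
    iInf_neBot_of_directed' (fun m n => ⟨max m n,
      inf_le_inf_left _ (principal_mono.mpr (hD (le_max_left m n))),
      inf_le_inf_left _ (principal_mono.mpr (hD (le_max_right m n)))⟩)
      fun n => (hinf n).cofinite_inf_principal_neBot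
  refine ⟨Ultrafilter.of (⨅ n, cofinite ⊓ 𝓟 (D n)), fun s hs => ?_, fun n => ?_⟩
  · exact Ultrafilter.of_le _ (mem_iInf_of_mem 0 (mem_inf_of_left hs))
  · exact Ultrafilter.of_le _ (mem_iInf_of_mem n (mem_inf_of_right (mem_principal_self _)))

theorem Ultrafilter.map_eq_self_of_eventually_fixed {p : Ultrafilter X} {g : Equiv.Perm X}
    (h : ∀ᶠ x in p, g x = x) : p.map g = p :=
  Ultrafilter.coe_injective ((Filter.map_congr (m₂ := id) h).trans Filter.map_id)

theorem Ultrafilter.map_ne_map_of_disjoint_image {p : Ultrafilter X} {D : Set X} (hD : D ∈ p)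
    {σ τ : Equiv.Perm X} (h : Disjoint (⇑σ '' D) (⇑τ '' D)) : p.map σ ≠ p.map τ := by
  intro heq
  have hσ : ⇑σ '' D ∈ p.map σ := Filter.image_mem_map hD
  have hτ : ⇑τ '' D ∈ p.map σ := heq ▸ Filter.image_mem_map hD
  exact (p.map σ).empty_notMem (h.inter_eq ▸ Filter.inter_mem hσ hτ)

structure DisjointTranslates (G : Subgroup (Equiv.Perm X)) (A : Set X)
    (K : Finset (Equiv.Perm X)) (D : Set X) : Prop where
  one_mem : 1 ∈ K
  subset : ↑K ⊆ (G : Set (Equiv.Perm X))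
  infinite : D.Infinite
  image_subset : ∀ σ ∈ K, ⇑σ '' D ⊆ A
  pairwiseDisjoint : (K : Set (Equiv.Perm X)).PairwiseDisjoint fun σ => ⇑σ '' D

variable {G : Subgroup (Equiv.Perm X)} {A : Set X}

theorem entourage_mem_XGsets {F : Finset (Equiv.Perm X)} (h1 : 1 ∈ F)
    (hF : ↑F ⊆ (G : Set (Equiv.Perm X))) : entourage ↑F ∈ XGsets G :=
  ⟨fun _ => ⟨1, h1, rfl⟩, F, h1, hF, subset_rfl⟩

theorem isThin_iff_finite_moved :
    IsThin G A ↔ ∀ g ∈ G, {a ∈ A | g a ∈ A ∧ g a ≠ a}.Finite := by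
  classical
  constructor
  · intro hA g hg
    obtain ⟨B, hB, hBA⟩ := hA _ (entourage_mem_XGsets (F := {1, g}) (by simp)
      (by simp [Set.insert_subset_iff, one_mem, hg]))
    refine hB.subset fun a ⟨ha, hga, hgaa⟩ => ?_
    by_contra haB
    have : g a ∈ ball (entourage ↑({1, g} : Finset (Equiv.Perm X))) {a} ∩ A :=
      ⟨⟨a, rfl, g, by simp, rfl⟩, hga⟩
    rw [hBA a ⟨ha, haB⟩] at this
    exact hgaa this
  · rintro hA E ⟨hdiag, F, -, hFG, hEF⟩
    refine ⟨⋃ g ∈ F, {a ∈ A | g a ∈ A ∧ g a ≠ a},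
      F.finite_toSet.biUnion fun g hg => hA g (hFG hg), fun a ⟨ha, haB⟩ => ?_⟩
    refine Set.Subset.antisymm (fun y ⟨⟨a', ha', hy⟩, hyA⟩ => ?_)
      (Set.singleton_subset_iff.mpr ⟨⟨a, rfl, hdiag a⟩, ha⟩)
    obtain rfl : a' = a := ha'
    obtain ⟨g, hgF, hgy⟩ := hEF hy
    change y = g a' at hgy
    subst hgy
    by_contra hga
    exact haB (Set.mem_biUnion hgF ⟨ha, hyA, hga⟩)

theorem IsThin.map_eq_self {p : Ultrafilter X} {g : Equiv.Perm X} (hA : IsThin G A) (hp : IsFree p)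
    (hg : g ∈ G) (hAp : A ∈ p) (hAgp : A ∈ p.map g) : p.map g = p := by
  refine Ultrafilter.map_eq_self_of_eventually_fixed ?_
  filter_upwards [hAp, Ultrafilter.mem_map.mp hAgp,
    hp (isThin_iff_finite_moved.mp hA g hg).compl_mem_cofinite] with a ha hga hmoved
  by_contra hgaa
  exact hmoved ⟨ha, hga, hgaa⟩

theorem exists_map_ne_of_not_isSparse (h : ¬ IsSparse G A) :
    ∃ p : Ultrafilter X, IsFree p ∧ ∃ g ∈ G, A ∈ p ∧ A ∈ p.map g ∧ p.map g ≠ p := by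
  simp only [IsSparse, not_forall] at h
  obtain ⟨p, hp, hinf⟩ := h
  obtain ⟨_, ⟨hA₁, g₁, hg₁, rfl⟩, _, ⟨hA₂, g₂, hg₂, rfl⟩, hne⟩ := Set.Infinite.nontrivial hinf
  have hcomp : (p.map g₁).map ⇑(g₂ * g₁⁻¹) = p.map g₂ := by
    rw [Ultrafilter.map_map]
    congr 1
    ext x
    simp
  exact ⟨p.map g₁, hp.map g₁, g₂ * g₁⁻¹, mul_mem hg₂ (inv_mem hg₁), hA₁, hcomp ▸ hA₂,
    hcomp ▸ hne.symm⟩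

theorem DisjointTranslates.exists_insert [DecidableEq (Equiv.Perm X)]
    {K : Finset (Equiv.Perm X)} {D : Set X}
    (hA : ∀ B ⊆ A, B.Infinite → ¬ IsThin G B) (h : DisjointTranslates G A K D) :
    ∃ g ∉ K, ∃ D' ⊆ D, DisjointTranslates G A (insert g K) D' := by
  have hDA : D ⊆ A := by simpa using h.image_subset 1 h.one_mem
  obtain ⟨g, hgG, hS⟩ : ∃ g ∈ G, {a ∈ D | g a ∈ D ∧ g a ≠ a}.Infinite := by
    simpa [isThin_iff_finite_moved] using hA D hDA h.infinite
  -- `g x` lies in `D = 1 '' D`, which meets no other translate of `D`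
  have hg_ne : ∀ x ∈ {a ∈ D | g a ∈ D ∧ g a ≠ a}, ∀ τ ∈ K, g x ≠ τ x := by
    rintro x ⟨hx, hgx, hgxx⟩ τ hτ heq
    obtain rfl : τ = 1 := by
      by_contra hτ1
      exact Set.disjoint_left.mp (h.pairwiseDisjoint hτ h.one_mem hτ1) (Set.mem_image_of_mem τ hx)
        (by simpa [← heq] using hgx)
    exact hgxx heq
  have hgK : g ∉ K := fun hgK =>
    let ⟨x, hx⟩ := hS.nonempty
    hg_ne x hx g hgK rfl
  have hinj : ∀ x ∈ {a ∈ D | g a ∈ D ∧ g a ≠ a},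
      (↑(insert g K) : Set (Equiv.Perm X)).InjOn fun σ => σ x := by
    intro x hx σ hσ τ hτ hστ
    simp only at hστ
    rw [Finset.coe_insert] at hσ hτ
    rcases hσ with rfl | hσ <;> rcases hτ with rfl | hτ
    · rfl
    · exact absurd hστ (hg_ne x hx τ hτ)
    · exact absurd hστ.symm (hg_ne x hx σ hσ)
    · by_contra hne
      exact Set.disjoint_left.mp (h.pairwiseDisjoint hσ hτ hne) (Set.mem_image_of_mem σ hx.1)
        (hστ ▸ Set.mem_image_of_mem τ hx.1)
  obtain ⟨D', hD'S, hD'inf, hD'⟩ :=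
    hS.exists_infinite_pairwiseDisjoint_image (Finset.finite_toSet _) hinj
  refine ⟨g, hgK, D', fun x hx => (hD'S hx).1, ⟨Finset.mem_insert_of_mem h.one_mem, ?_, hD'inf,
    ?_, hD'⟩⟩
  · simpa [Set.insert_subset_iff] using ⟨hgG, h.subset⟩
  · intro σ hσ
    rcases Finset.mem_insert.mp hσ with rfl | hσ
    · rintro _ ⟨x, hx, rfl⟩
      exact hDA (hD'S hx).2.1
    · exact (Set.image_mono fun x hx => (hD'S hx).1).trans (h.image_subset σ hσ)

theorem not_isSparse_of_forall_not_isThin (hA : A.Infinite)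
    (h : ∀ B ⊆ A, B.Infinite → ¬ IsThin G B) : ¬ IsSparse G A := by
  classical
  have hstart : DisjointTranslates G A {1} A :=
    ⟨Finset.mem_singleton_self 1, by simp, hA, by simp,
      by simp [Set.pairwiseDisjoint_singleton]⟩
  obtain ⟨s, hs⟩ := exists_seq_of_forall_exists
    (P := fun s : Finset (Equiv.Perm X) × Set X => DisjointTranslates G A s.1 s.2)
    (r := fun s t => ∃ g ∉ s.1, t.1 = insert g s.1 ∧ t.2 ⊆ s.2) (a := ({1}, A)) hstart
    fun s hs =>
      let ⟨g, hg, D', hD'D, hD'⟩ := hs.exists_insert h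
      ⟨(insert g s.1, D'), hD', g, hg, rfl, hD'D⟩
  choose hsP g hgK hK hD using hs
  have hKmono : Monotone fun n => (s n).1 :=
    monotone_nat_of_le_succ fun n => (hK n).symm ▸ Finset.subset_insert _ _
  have hg_mem : ∀ m n, m < n → g m ∈ (s n).1 := fun m n hmn =>
    hKmono hmn (show g m ∈ (s (m + 1)).1 from (hK m).symm ▸ Finset.mem_insert_self _ _)
  obtain ⟨p, hp, hDp⟩ :=
    exists_isFree_forall_mem (antitone_nat_of_succ_le hD) fun n => (hsP n).infinite
  have hinj : Function.Injective fun n => p.map (g n) :=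
    Function.Injective.of_lt_imp_ne fun m n hmn =>
      p.map_ne_map_of_disjoint_image (hDp (n + 1)) ((hsP (n + 1)).pairwiseDisjoint
        (hg_mem m (n + 1) (by omega)) (hg_mem n (n + 1) n.lt_succ_self)
        fun h => hgK n (h ▸ hg_mem m n hmn))
  intro hsparse
  refine (Set.infinite_range_of_injective hinj).mono ?_ (hsparse p hp)
  rintro _ ⟨n, rfl⟩
  have hgn := hg_mem n (n + 1) n.lt_succ_self
  exact ⟨Ultrafilter.mem_map.mpr (Filter.mem_of_superset (hDp (n + 1))
    (Set.image_subset_iff.mp ((hsP (n + 1)).image_subset _ hgn))), g n, (hsP (n + 1)).subset hgn,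
    rfl⟩

end CoarseSpaces

theorem indiscrete_tfae_general {X : Type*} (G : Subgroup (Equiv.Perm X)) :
    List.TFAE [
      ∀ A : Set X, A.Infinite → ¬ IsThin G A,
      ∀ A : Set X, A.Infinite → ∃ p : Ultrafilter X, IsFree p ∧ ∃ g ∈ G,
        A ∈ p ∧ A ∈ Ultrafilter.map (⇑g) p ∧ Ultrafilter.map (⇑g) p ≠ p,
      ∀ A : Set X, A.Infinite → ¬ IsSparse G A ] := by
  tfae_have 1 → 3 := fun h A hA => not_isSparse_of_forall_not_isThin hA fun B _ => h B
  tfae_have 3 → 2 := fun h A hA => exists_map_ne_of_not_isSparse (h A hA)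
  tfae_have 2 → 1 := fun h A hA hthin =>
    let ⟨_, hp, _, hg, hAp, hAgp, hne⟩ := h A hA
    hne (hthin.map_eq_self hp hg hAp hAgp)
  tfae_finish

/-- TFAE for a finitary coarse space `X_G`: (1) `X_G` is indiscrete;
(2) for every infinite `A ⊆ X` there are a free ultrafilter `p` and `g ∈ G` with
`A ∈ p`, `A ∈ gp` and `gp ≠ p`; (3) no infinite subset of `X` is sparse. -/
theorem indiscrete_tfae {X : Type*} [Infinite X] (G : Subgroup (Equiv.Perm X)) :
    List.TFAE [
      ∀ A : Set X, A.Infinite → ¬ IsThin G A,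
      ∀ A : Set X, A.Infinite → ∃ p : Ultrafilter X, IsFree p ∧ ∃ g ∈ G,
        A ∈ p ∧ A ∈ Ultrafilter.map (⇑g) p ∧ Ultrafilter.map (⇑g) p ≠ p,
      ∀ A : Set X, A.Infinite → ¬ IsSparse G A ] :=
  indiscrete_tfae_general G
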